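/- Let R be a (not necessarily commutative) ring, q ≥ 1, x₁,…,x_{q−1}, b ∈ R, and let E_{ij} denote the q × q matrix with (i,j)-entry 1 and all other entries 0. Then (∏_{i=1}^{q−1}(1 − x_i E_{i,i+1})) · (b E_{q1}) = ∑_{j=1}^{q} (−1)^{q−j} (x_j x_{j+1} ⋯ x_{q−1}) b E_{j1}, where the product over i is taken in increasing order of i and the empty product x_q ⋯ x_{q−1} is 1. -/

import Mathlib

/-!
Left multiplication by `1 - a E_{i,i+1}` subtracts `a` times row `i + 1` from row `i`. Applying
the factors to `b E_{q1}` from right to left therefore fills the first column from the bottom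
up with `c_q = b` and `c_i = -x_i c_{i+1}`, and the alternating tail products in the statement are
the solution of this recurrence.
-/

open Matrix Finset

lemma List.drop_finRange_eq_cons {n : ℕ} (i : Fin n) :
    (List.finRange n).drop i = i :: (List.finRange n).drop (i + 1) := by
  rw [List.drop_eq_getElem_cons (by simp)]
  simp

lemma Fin.Ioi_castSucc_eq_Ici_succ {n : ℕ} (i : Fin n) : Ioi i.castSucc = Ici i.succ := by
  ext j
  simp [Fin.castSucc_lt_iff_succ_le]

section

variable {R ι : Type*} [Ring R] [DecidableEq ι]

lemma Matrix.single_mul_sum_single {l m : Type*} [DecidableEq l] [Fintype m] [DecidableEq m]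
    (i : l) {j : m} (a : R) {s : Finset m} (hj : j ∈ s) (c : m → R) (k : ι) :
    single i j a * ∑ t ∈ s, single t k (c t) = single i k (a * c j) := by
  rw [Matrix.mul_sum, Finset.sum_eq_single_of_mem j hj
    (fun t _ ht => single_mul_single_of_ne _ _ _ _ (Ne.symm ht) _), single_mul_single_same]

variable {n : ℕ}

lemma one_sub_single_mul_sum_Ici_succ (i : Fin n) (a : R) {c : Fin (n + 1) → R}
    (hc : c i.castSucc = -(a * c i.succ)) (l : ι) :
    (1 - single i.castSucc i.succ a) * ∑ j ∈ Ici i.succ, single j l (c j) =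
      ∑ j ∈ Ici i.castSucc, single j l (c j) := by
  have single_neg : single i.castSucc l (-(a * c i.succ)) = -single i.castSucc l (a * c i.succ) :=
    map_neg (singleAddMonoidHom i.castSucc l) _
  rw [Matrix.sub_mul, Matrix.one_mul, single_mul_sum_single _ _ (mem_Ici.2 le_rfl),
    ← Ioi_insert i.castSucc, sum_insert notMem_Ioi_self, Fin.Ioi_castSucc_eq_Ici_succ, hc,
    single_neg]
  abel

theorem prod_drop_one_sub_single_mul_single_last (x : Fin n → R) {c : Fin (n + 1) → R}
    (hc : ∀ i : Fin n, c i.castSucc = -(x i * c i.succ)) (l : ι) (k : Fin (n + 1)) :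
    (((List.finRange n).drop k).map fun i =>
        (1 - single i.castSucc i.succ (x i) : Matrix (Fin (n + 1)) (Fin (n + 1)) R)).prod *
      single (Fin.last n) l (c (Fin.last n)) = ∑ j ∈ Ici k, single j l (c j) := by
  induction k using Fin.reverseInduction with
  | last =>
    rw [List.drop_of_length_le (by simp), show Ici (Fin.last n) = {Fin.last n} from Ici_top]
    simp
  | cast i ih =>
    rw [Fin.val_castSucc, List.drop_finRange_eq_cons, List.map_cons, List.prod_cons,
      Matrix.mul_assoc, ← Fin.val_succ, ih, one_sub_single_mul_sum_Ici_succ i _ (hc i)]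

lemma neg_one_pow_mul_prod_drop_castSucc (x : Fin n → R) (b : R) (i : Fin n) :
    (-1 : R) ^ (n - i.castSucc) * (((List.finRange n).drop i.castSucc).map x).prod * b =
      -(x i * ((-1) ^ (n - i.succ) * (((List.finRange n).drop i.succ).map x).prod * b)) := by
  rw [Fin.val_castSucc, List.drop_finRange_eq_cons, List.map_cons, List.prod_cons, Fin.val_succ,
    show n - i = n - (i + 1) + 1 by omega, pow_succ]
  rcases neg_one_pow_eq_or R (n - (i + 1)) with h | h <;> simp [h, mul_assoc]

theorem prod_one_sub_single_mul_single_last (x : Fin n → R) (b : R) (l : ι) :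
    ((List.finRange n).map fun i =>
        (1 - single i.castSucc i.succ (x i) : Matrix (Fin (n + 1)) (Fin (n + 1)) R)).prod *
      single (Fin.last n) l b =
    ∑ j : Fin (n + 1),
      single j l ((-1 : R) ^ (n - j) * (((List.finRange n).drop j).map x).prod * b) := by
  have h := prod_drop_one_sub_single_mul_single_last x
    (c := fun j => (-1 : R) ^ (n - j) * (((List.finRange n).drop j).map x).prod * b)
    (neg_one_pow_mul_prod_drop_castSucc x b) l 0
  rw [Fin.val_zero, List.drop_zero, Ici_zero_eq_univ] at h
  simpa [List.drop_of_length_le] using h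

end

theorem stmt18 (R : Type*) [Ring R] (q : ℕ) (hq : 1 ≤ q)
    (x : Fin (q - 1) → R) (b : R) :
    (((List.finRange (q - 1)).map (fun i =>
        (1 : Matrix (Fin q) (Fin q) R) -
          Matrix.single (⟨i.1, by have := i.2; omega⟩ : Fin q)
            (⟨i.1 + 1, by have := i.2; omega⟩ : Fin q) (x i))).prod)
      * Matrix.single (⟨q - 1, by omega⟩ : Fin q) (⟨0, by omega⟩ : Fin q) b =
    ∑ j : Fin q,
      Matrix.single j (⟨0, by omega⟩ : Fin q)
        ((-1 : R) ^ (q - 1 - j.1) *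
          ((((List.finRange (q - 1)).drop j.1).map x).prod) * b) := by
  obtain ⟨n, rfl⟩ : ∃ n, q = n + 1 := ⟨q - 1, by omega⟩
  exact prod_one_sub_single_mul_single_last x b 0
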